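/- arXiv:2603.16712 — 6 statements merged into one kernel-verified Lean document; each statement's English description precedes it below -/
import Mathlib

section
/- Let d ≥ 1, ε ∈ [0,1], q ∈ [0,1], let P be a Borel probability measure on ℝ^d, and let Q be a Borel probability measure on ℝ^d_⋆. Then Q belongs to the realizable contamination set R(P,ε,q) if and only if for every Borel set A ⊆ ℝ^d one has q(1−ε)·P(A) ≤ Q(ι(A)) ≤ (q(1−ε)+ε)·P(A). -/
open MeasureTheory ProbabilityTheory

noncomputable section

/-- The Borel σ-algebra on the extended space `Option X = X ⊔ {⋆}`. -/
instance optionMeasurableSpace {X : Type*} [MeasurableSpace X] : MeasurableSpace (Option X) :=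
  MeasurableSpace.comap (fun o : Option X => (o.elim (Sum.inr ()) Sum.inl : X ⊕ Unit)) inferInstance

/-- The MNAR (missing not at random) contamination set of a base measure `P`:
all laws of `X ⋆-masked by an arbitrary (possibly `X`-dependent) missingness indicator`. -/
def MNARset {X : Type*} [MeasurableSpace X] (P : Measure X) : Set (Measure (Option X)) :=
  {Q | ∃ μ : Measure (X × Bool), IsProbabilityMeasure μ ∧ μ.map Prod.fst = P ∧
      Q = μ.map (fun p => if p.2 then some p.1 else none)}

/-- The MCAR measure: each observation from `P` is revealed independently with probability `q`. -/
def MCARmeas {X : Type*} [MeasurableSpace X] (P : Measure X) (q : ℝ) : Measure (Option X) :=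
  ENNReal.ofReal q • P.map some + ENNReal.ofReal (1 - q) • Measure.dirac none

/-- The realizable contamination set `R(P, ε, q)`. -/
def RSet {X : Type*} [MeasurableSpace X] (P : Measure X) (ε q : ℝ) :
    Set (Measure (Option X)) :=
  {Q | ∃ Q₂ ∈ MNARset P, Q = ENNReal.ofReal (1 - ε) • MCARmeas P q + ENNReal.ofReal ε • Q₂}

section Helpers

variable {X : Type*} [MeasurableSpace X]

lemma measurable_some' : Measurable (some : X → Option X) := by
  intro B hB
  obtain ⟨S, hS, rfl⟩ := hB
  exact measurable_inl hS

lemma measurableSet_some_image {A : Set X} (hA : MeasurableSet A) :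
    MeasurableSet (some '' A) := by
  refine ⟨Sum.inl '' A, hA.inl_image, ?_⟩
  ext o
  cases o <;> simp [Option.elim]

lemma measurableSet_none' : MeasurableSet ({none} : Set (Option X)) := by
  refine ⟨Set.range Sum.inr, measurableSet_range_inr, ?_⟩
  ext o
  cases o <;> simp [Option.elim]

lemma measurable_mask :
    Measurable (fun p : X × Bool => if p.2 then some p.1 else none) := by
  refine Measurable.ite ?_ (measurable_some'.comp measurable_fst) measurable_const
  rw [show {a : X × Bool | a.2 = true} = Prod.snd ⁻¹' {true} from rfl]
  exact measurable_snd (measurableSet_singleton true)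

lemma mask_preimage_some_image (A : Set X) :
    (fun p : X × Bool => if p.2 then some p.1 else none) ⁻¹' (some '' A) = A ×ˢ {true} := by
  ext ⟨x, b⟩
  cases b <;> simp

lemma decomp (Q : Measure (Option X)) {B : Set (Option X)} (hB : MeasurableSet B) :
    Q B = Q (some '' (some ⁻¹' B)) + Q (B ∩ {none}) := by
  have hset : B = (some '' (some ⁻¹' B)) ∪ (B ∩ {none}) := by
    ext o
    cases o <;> simp
  have hdisj : Disjoint (some '' (some ⁻¹' B)) (B ∩ {none}) := by
    rw [Set.disjoint_left]
    rintro o ⟨x, -, rfl⟩ ⟨-, ho⟩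
    simp at ho
  conv_lhs => rw [hset]
  exact measure_union hdisj (hB.inter measurableSet_none')

lemma ext_of_some_image {Q1 Q2 : Measure (Option X)} (htot : Q1 Set.univ = Q2 Set.univ)
    (hfin : Q1 Set.univ ≠ ⊤)
    (h : ∀ A : Set X, MeasurableSet A → Q1 (some '' A) = Q2 (some '' A)) : Q1 = Q2 := by
  have hnone : Q1 {none} = Q2 {none} := by
    have h1 := decomp Q1 MeasurableSet.univ
    have h2 := decomp Q2 MeasurableSet.univ
    simp only [Set.preimage_univ, Set.univ_inter] at h1 h2
    have hne : Q1 (some '' Set.univ) ≠ ⊤ :=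
      ne_top_of_le_ne_top hfin (measure_mono (Set.subset_univ _))
    refine (ENNReal.add_right_inj hne).mp ?_
    rw [← h1, htot, h2, h Set.univ MeasurableSet.univ]
  ext B hB
  rw [decomp Q1 hB, decomp Q2 hB, h _ (measurable_some' hB)]
  congr 1
  by_cases hn : none ∈ B
  · have : B ∩ {none} = {none} := by
      ext o; simp; rintro rfl; exact hn
    rw [this, hnone]
  · have : B ∩ {none} = ∅ := by
      ext o; simp; rintro h rfl; exact hn h
    simp [this]

lemma MCAR_some_image (P : Measure X) (q : ℝ) {A : Set X} (hA : MeasurableSet A) :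
    MCARmeas P q (some '' A) = ENNReal.ofReal q * P A := by
  unfold MCARmeas
  rw [Measure.add_apply, Measure.smul_apply, Measure.smul_apply, smul_eq_mul, smul_eq_mul,
    Measure.map_apply measurable_some' (measurableSet_some_image hA),
    Set.preimage_image_eq A (Option.some_injective X),
    Measure.dirac_apply' _ (measurableSet_some_image hA)]
  simp

lemma MCAR_univ (P : Measure X) [IsProbabilityMeasure P] {q : ℝ} (hq0 : 0 ≤ q) (hq1 : q ≤ 1) :
    MCARmeas P q Set.univ = 1 := by
  unfold MCARmeas
  rw [Measure.add_apply, Measure.smul_apply, Measure.smul_apply, smul_eq_mul, smul_eq_mul,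
    Measure.map_apply measurable_some' MeasurableSet.univ]
  simp only [Set.preimage_univ, measure_univ, Measure.dirac_apply_of_mem (Set.mem_univ _),
    mul_one]
  rw [← ENNReal.ofReal_add hq0 (by linarith)]
  norm_num

lemma map_some_mem_MNAR (P : Measure X) [IsProbabilityMeasure P] :
    P.map some ∈ MNARset P := by
  refine ⟨P.map (fun x => (x, true)), ?_, ?_, ?_⟩
  · exact Measure.isProbabilityMeasure_map measurable_prodMk_right.aemeasurable
  · rw [Measure.map_map measurable_fst measurable_prodMk_right]
    exact Measure.map_id'
  · rw [Measure.map_map measurable_mask measurable_prodMk_right]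
    rfl

end Helpers

/-- characterization of the realizable contamination set:
`Q ∈ R(P, ε, q)` iff `q(1−ε)·P(A) ≤ Q(ι(A)) ≤ (q(1−ε)+ε)·P(A)` for all Borel `A ⊆ ℝ^d`. -/
theorem realizable_iff_sandwich
    (d : ℕ) (hd : 1 ≤ d) (ε q : ℝ) (hε : ε ∈ Set.Icc (0:ℝ) 1) (hq : q ∈ Set.Icc (0:ℝ) 1)
    (P : Measure (EuclideanSpace ℝ (Fin d))) [IsProbabilityMeasure P]
    (Q : Measure (Option (EuclideanSpace ℝ (Fin d)))) [IsProbabilityMeasure Q] :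
    Q ∈ RSet P ε q ↔
      ∀ A : Set (EuclideanSpace ℝ (Fin d)), MeasurableSet A →
        ENNReal.ofReal (q * (1 - ε)) * P A ≤ Q (Option.some '' A) ∧
        Q (Option.some '' A) ≤ ENNReal.ofReal (q * (1 - ε) + ε) * P A := by
  obtain ⟨hε0, hε1⟩ := hε
  obtain ⟨hq0, hq1⟩ := hq
  constructor
  · rintro ⟨Q₂, ⟨μ, -, hμfst, rfl⟩, rfl⟩ A hA
    have himg := measurableSet_some_image hA
    have hQA : (ENNReal.ofReal (1 - ε) • MCARmeas P q +
        ENNReal.ofReal ε • μ.map (fun p => if p.2 then some p.1 else none)) (some '' A) =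
        ENNReal.ofReal (1 - ε) * (ENNReal.ofReal q * P A) +
          ENNReal.ofReal ε * μ (A ×ˢ {true}) := by
      rw [Measure.add_apply, Measure.smul_apply, Measure.smul_apply, smul_eq_mul, smul_eq_mul,
        MCAR_some_image P q hA, Measure.map_apply measurable_mask himg,
        mask_preimage_some_image]
    have hbound : μ (A ×ˢ {true}) ≤ P A := by
      rw [← hμfst, Measure.map_apply measurable_fst hA]
      exact measure_mono (fun p hp => hp.1)
    constructor
    · rw [hQA, mul_comm q, ENNReal.ofReal_mul (by linarith : (0:ℝ) ≤ 1 - ε), mul_assoc]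
      exact le_self_add
    · rw [hQA, ENNReal.ofReal_add (mul_nonneg hq0 (by linarith)) hε0, add_mul,
        mul_comm q, ENNReal.ofReal_mul (by linarith : (0:ℝ) ≤ 1 - ε), mul_assoc]
      exact add_le_add le_rfl (mul_le_mul_right hbound _)
  · intro h
    by_cases hE : ε = 0
    · subst hE
      refine ⟨P.map some, map_some_mem_MNAR P, ?_⟩
      have hQM : Q = MCARmeas P q := by
        refine ext_of_some_image ?_ (by simp) ?_
        · rw [measure_univ, MCAR_univ P hq0 hq1]
        · intro A hA
          obtain ⟨h1, h2⟩ := h A hA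
          simp only [sub_zero, mul_one, add_zero] at h1 h2
          rw [MCAR_some_image P q hA]
          exact le_antisymm h2 h1
      rw [hQM]
      simp
    · have hεpos : 0 < ε := lt_of_le_of_ne hε0 (Ne.symm hE)
      set X' := EuclideanSpace ℝ (Fin d)
      set c := ENNReal.ofReal ε with hc
      have hc0 : c ≠ 0 := ne_of_gt (ENNReal.ofReal_pos.mpr hεpos)
      have hctop : c ≠ ⊤ := ENNReal.ofReal_ne_top
      set a := ENNReal.ofReal (q * (1 - ε)) with ha
      have hatop : a ≠ ⊤ := ENNReal.ofReal_ne_top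
      set ν := Q.comap some with hνdef
      have hν : ∀ A : Set X', MeasurableSet A → ν A = Q (some '' A) := fun A hA =>
        Measure.comap_apply some (Option.some_injective _)
          (fun s hs => measurableSet_some_image hs) Q hA
      haveI : IsFiniteMeasure ν := ⟨by
        rw [hν _ MeasurableSet.univ]
        exact (measure_mono (Set.subset_univ _)).trans_lt (by simp [measure_univ])⟩
      haveI : IsFiniteMeasure (a • P) := ⟨by
        rw [Measure.smul_apply, smul_eq_mul, measure_univ, mul_one]
        exact hatop.lt_top⟩
      have hle1 : a • P ≤ ν := Measure.le_iff.mpr (fun s hs => by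
        rw [Measure.smul_apply, smul_eq_mul, hν s hs]; exact (h s hs).1)
      set σ := ν - a • P with hσdef
      have hσ : ∀ A : Set X', MeasurableSet A → σ A = ν A - a * P A := fun A hA => by
        rw [hσdef, Measure.sub_apply hA hle1, Measure.smul_apply, smul_eq_mul]
      have hσle : σ ≤ c • P := Measure.le_iff.mpr (fun s hs => by
        rw [hσ s hs, Measure.smul_apply, smul_eq_mul]
        refine tsub_le_iff_right.mpr ?_
        rw [hν s hs]
        calc Q (some '' s) ≤ ENNReal.ofReal (q * (1 - ε) + ε) * P s := (h s hs).2
          _ = c * P s + a * P s := by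
              rw [ENNReal.ofReal_add (mul_nonneg hq0 (by linarith)) hε0, ← ha, ← hc, add_mul,
                add_comm])
      set τ := c⁻¹ • σ with hτdef
      have hτ : ∀ A : Set X', c * τ A = σ A := fun A => by
        rw [hτdef, Measure.smul_apply, smul_eq_mul, ← mul_assoc,
          ENNReal.mul_inv_cancel hc0 hctop, one_mul]
      have hτle : τ ≤ P := Measure.le_iff'.mpr (fun s => by
        have hs' : σ s ≤ c * P s := by
          have := Measure.le_iff'.mp hσle s
          rwa [Measure.smul_apply, smul_eq_mul] at this
        calc τ s = c⁻¹ * σ s := by rw [hτdef, Measure.smul_apply, smul_eq_mul]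
          _ ≤ c⁻¹ * (c * P s) := mul_le_mul_right hs' _
          _ = P s := by rw [← mul_assoc, ENNReal.inv_mul_cancel hc0 hctop, one_mul])
      haveI : IsFiniteMeasure τ :=
        ⟨(Measure.le_iff'.mp hτle Set.univ).trans_lt (measure_lt_top P _)⟩
      set μ' := τ.map (fun x => (x, true)) + (P - τ).map (fun x => (x, false)) with hμ'
      have hfst : μ'.map Prod.fst = P := by
        rw [hμ', Measure.map_add _ _ measurable_fst,
          Measure.map_map measurable_fst measurable_prodMk_right,
          Measure.map_map measurable_fst measurable_prodMk_right]
        show τ.map (fun x => x) + (P - τ).map (fun x => x) = P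
        rw [Measure.map_id', Measure.map_id', add_comm, Measure.sub_add_cancel_of_le hτle]
      have hμ'prob : IsProbabilityMeasure μ' := ⟨by
        have h1 : μ'.map Prod.fst Set.univ = 1 := by rw [hfst, measure_univ]
        rwa [Measure.map_apply measurable_fst MeasurableSet.univ, Set.preimage_univ] at h1⟩
      set Q₂ := μ'.map (fun p : X' × Bool => if p.2 then some p.1 else none) with hQ₂
      refine ⟨Q₂, ⟨μ', hμ'prob, hfst, hQ₂⟩, ?_⟩
      have hQ₂img : ∀ A : Set X', MeasurableSet A → Q₂ (some '' A) = τ A := fun A hA => by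
        rw [hQ₂, Measure.map_apply measurable_mask (measurableSet_some_image hA),
          mask_preimage_some_image, hμ', Measure.add_apply,
          Measure.map_apply measurable_prodMk_right (hA.prod (measurableSet_singleton true)),
          Measure.map_apply measurable_prodMk_right (hA.prod (measurableSet_singleton true))]
        have h1 : (fun x : X' => (x, true)) ⁻¹' (A ×ˢ {true}) = A := by ext x; simp
        have h2 : (fun x : X' => (x, false)) ⁻¹' (A ×ˢ {true}) = (∅ : Set X') := by ext x; simp
        rw [h1, h2, measure_empty, add_zero]
      haveI : IsProbabilityMeasure Q₂ := by
        rw [hQ₂]; exact Measure.isProbabilityMeasure_map measurable_mask.aemeasurable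
      refine ext_of_some_image ?_ (by simp) ?_
      · rw [measure_univ, Measure.add_apply, Measure.smul_apply, Measure.smul_apply,
          smul_eq_mul, smul_eq_mul, MCAR_univ P hq0 hq1, measure_univ, mul_one, mul_one,
          ← hc, ← ENNReal.ofReal_add (by linarith) hε0]
        norm_num
      · intro A hA
        rw [Measure.add_apply, Measure.smul_apply, Measure.smul_apply, smul_eq_mul, smul_eq_mul,
          MCAR_some_image P q hA, hQ₂img A hA, hτ A, hσ A hA, hν A hA]
        have hkey : ENNReal.ofReal (1 - ε) * (ENNReal.ofReal q * P A) = a * P A := by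
          rw [← mul_assoc, ← ENNReal.ofReal_mul (by linarith : (0:ℝ) ≤ 1 - ε),
            mul_comm (1 - ε) q, ha]
        have hlow : a * P A ≤ Q (some '' A) := (h A hA).1
        rw [hkey, add_comm, tsub_add_cancel_of_le hlow]

end
end

section
/- Let d ≥ 1, ε ∈ [0,1), q ∈ [0,1], and suppose q' := ε + q(1−ε) > 0; set ε' := ε/(ε + q(1−ε)). Then for every Borel probability measure P on ℝ^d, the realizable contamination set satisfies the identity R(P,ε,q) = { q'·Q' + (1−q')·δ_⋆ : Q' ∈ R(P,ε',1) }. -/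
open MeasureTheory ProbabilityTheory

noncomputable section

lemma key_conv {X : Type*} [MeasurableSpace X] (ε q : ℝ) (hε0 : 0 ≤ ε) (hε1 : ε < 1)
    (hq : q ∈ Set.Icc (0:ℝ) 1) (hq' : 0 < ε + q * (1 - ε))
    (P : Measure X) (Q₂ : Measure (Option X)) :
    ENNReal.ofReal (1 - ε) • MCARmeas P q + ENNReal.ofReal ε • Q₂ =
      ENNReal.ofReal (ε + q * (1 - ε)) •
        (ENNReal.ofReal (1 - ε / (ε + q * (1 - ε))) • MCARmeas P 1
          + ENNReal.ofReal (ε / (ε + q * (1 - ε))) • Q₂)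
        + ENNReal.ofReal (1 - (ε + q * (1 - ε))) • Measure.dirac none := by
  obtain ⟨hq0, hq1⟩ := hq
  set q' := ε + q * (1 - ε) with hq'def
  have h1ε : 0 ≤ 1 - ε := by linarith
  have hq'nn : 0 ≤ q' := hq'.le
  have hε' : 0 ≤ ε / q' := div_nonneg hε0 hq'nn
  have h1ε' : 0 ≤ 1 - ε / q' := by
    rw [sub_nonneg, div_le_one hq']
    nlinarith
  have hM1 : MCARmeas P 1 = P.map some := by
    simp [MCARmeas]
  rw [hM1]
  simp only [MCARmeas, smul_add, smul_smul]
  rw [← ENNReal.ofReal_mul h1ε, ← ENNReal.ofReal_mul h1ε,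
    ← ENNReal.ofReal_mul hq'nn, ← ENNReal.ofReal_mul hq'nn]
  have e1 : (1 - ε) * q = q' * (1 - ε / q') := by
    field_simp
    ring
  have e2 : q' * (ε / q') = ε := by
    field_simp
  have e3 : (1 - ε) * (1 - q) = 1 - q' := by ring
  rw [e1, e2, e3]
  abel

/-- reduction to `q = 1`: with `q' = ε + q(1−ε) > 0` and
`ε' = ε / (ε + q(1−ε))`, one has `R(P,ε,q) = { q'·Q' + (1−q')·δ_⋆ : Q' ∈ R(P,ε',1) }`. -/
theorem realizable_general_q_conversion
    (d : ℕ) (hd : 1 ≤ d) (ε q : ℝ) (hε0 : 0 ≤ ε) (hε1 : ε < 1)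
    (hq : q ∈ Set.Icc (0:ℝ) 1) (hq' : 0 < ε + q * (1 - ε))
    (P : Measure (EuclideanSpace ℝ (Fin d))) [IsProbabilityMeasure P] :
    RSet P ε q =
      {Q | ∃ Q' ∈ RSet P (ε / (ε + q * (1 - ε))) 1,
        Q = ENNReal.ofReal (ε + q * (1 - ε)) • Q'
            + ENNReal.ofReal (1 - (ε + q * (1 - ε))) • Measure.dirac none} := by
  ext Q
  simp only [RSet, Set.mem_setOf_eq]
  constructor
  · rintro ⟨Q₂, hQ₂, rfl⟩
    exact ⟨_, ⟨Q₂, hQ₂, rfl⟩, key_conv ε q hε0 hε1 hq hq' P Q₂⟩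
  · rintro ⟨Q', ⟨Q₂, hQ₂, rfl⟩, rfl⟩
    exact ⟨Q₂, hQ₂, (key_conv ε q hε0 hε1 hq hq' P Q₂).symm⟩

end
end

section
/- Let P, Q, R be probability measures on a measurable space with Q absolutely continuous with respect to P and P absolutely continuous with respect to R, let τ ≥ 0, and suppose the Radon–Nikodym derivative satisfies (dQ/dP)(z) ≤ 1 + τ for P-almost every z. Define the chi-squared divergence χ²(μ, ν) := ∫ (dμ/dν)² dν − 1, and assume χ²(P, R) < ∞. Then χ²(Q, R) ≤ (1+τ)²·(1 + χ²(P, R)) − 1. -/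
open MeasureTheory
open scoped ENNReal

noncomputable section

/-- The chi-squared divergence `χ²(μ, ν) = ∫ (dμ/dν)² dν − 1` (valued in `ℝ≥0∞`). -/
def chiSqDiv {Ω : Type*} [MeasurableSpace Ω] (μ ν : Measure Ω) : ℝ≥0∞ :=
  (∫⁻ x, (μ.rnDeriv ν x) ^ 2 ∂ν) - 1

/-- chi-squared divergence under bounded likelihood ratios, Claim F.3:
if `dQ/dP ≤ 1 + τ` `P`-a.e. then `χ²(Q,R) ≤ (1+τ)²(1 + χ²(P,R)) − 1`. -/
theorem chiSq_of_bounded_likelihood_ratio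
    {Ω : Type*} [MeasurableSpace Ω] (P Q R : Measure Ω)
    [IsProbabilityMeasure P] [IsProbabilityMeasure Q] [IsProbabilityMeasure R]
    (hQP : Q ≪ P) (hPR : P ≪ R) (τ : ℝ) (hτ : 0 ≤ τ)
    (hratio : ∀ᵐ z ∂P, Q.rnDeriv P z ≤ ENNReal.ofReal (1 + τ))
    (hfin : chiSqDiv P R < ⊤) :
    chiSqDiv Q R ≤ ENNReal.ofReal ((1 + τ) ^ 2) * (1 + chiSqDiv P R) - 1 := by
  set c : ℝ≥0∞ := ENNReal.ofReal (1 + τ) with hc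
  -- move the a.e. bound to R
  have hratio' : ∀ᵐ z ∂ R, P.rnDeriv R z ≠ 0 → Q.rnDeriv P z ≤ c := by
    have h : ∀ᵐ z ∂(R.withDensity (P.rnDeriv R)), Q.rnDeriv P z ≤ c := by
      rwa [Measure.withDensity_rnDeriv_eq P R hPR]
    rwa [ae_withDensity_iff (Measure.measurable_rnDeriv _ _)] at h
  have hmul := Measure.rnDeriv_mul_rnDeriv (κ := R) hQP
  have hpt : ∀ᵐ z ∂ R, (Q.rnDeriv R z) ^ 2 ≤ c ^ 2 * (P.rnDeriv R z) ^ 2 := by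
    filter_upwards [hratio', hmul] with z h1 h2
    rw [← h2, Pi.mul_apply]
    rcases eq_or_ne (P.rnDeriv R z) 0 with h0 | h0
    · simp [h0]
    · calc (Q.rnDeriv P z * P.rnDeriv R z) ^ 2
          ≤ (c * P.rnDeriv R z) ^ 2 := by
            gcongr; exact h1 h0
        _ = c ^ 2 * (P.rnDeriv R z) ^ 2 := by ring
  have hint : ∫⁻ z, (Q.rnDeriv R z) ^ 2 ∂ R ≤ c ^ 2 * ∫⁻ z, (P.rnDeriv R z) ^ 2 ∂ R := by
    rw [← lintegral_const_mul' _ _ (by simp [hc])]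
    exact lintegral_mono_ae hpt
  have hcsq : ENNReal.ofReal ((1 + τ) ^ 2) = c ^ 2 := by
    rw [hc, ← ENNReal.ofReal_pow (by linarith)]
  have hle1 : ∫⁻ z, (P.rnDeriv R z) ^ 2 ∂ R ≤ 1 + chiSqDiv P R := by
    rw [chiSqDiv, add_comm]
    exact le_tsub_add
  calc chiSqDiv Q R = (∫⁻ z, (Q.rnDeriv R z) ^ 2 ∂ R) - 1 := rfl
    _ ≤ c ^ 2 * (∫⁻ z, (P.rnDeriv R z) ^ 2 ∂ R) - 1 := tsub_le_tsub_right hint 1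
    _ ≤ c ^ 2 * (1 + chiSqDiv P R) - 1 := by gcongr
    _ = ENNReal.ofReal ((1 + τ) ^ 2) * (1 + chiSqDiv P R) - 1 := by rw [hcsq]

end
end

section
/- Let d, ℓ ≥ 1 be integers, let γ > 1/2 be real, fix an index α = (i₁, …, i_ℓ) ∈ {1,…,d}^ℓ, and let z ~ N(0, I_d) be a standard Gaussian vector in ℝ^d. Set X := z_{i₁}·z_{i₂}···z_{i_ℓ}. Then E[ exp( |X|^{2/ℓ}/(8γ) ) ] ≤ e^{1/(2γ)}. -/
open MeasureTheory ProbabilityTheory Real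
open scoped ENNReal NNReal

noncomputable section

namespace GaussianTensorAux

/-- Type synonym for `ℝ` equipped with the standard Gaussian measure as volume. -/
def GaussR : Type := ℝ

instance : MeasurableSpace GaussR := inferInstanceAs (MeasurableSpace ℝ)
instance : MeasureSpace GaussR := ⟨gaussianReal 0 1⟩
instance : IsProbabilityMeasure (volume : Measure GaussR) :=
  inferInstanceAs (IsProbabilityMeasure (gaussianReal 0 1))
instance : SigmaFinite (volume : Measure GaussR) := inferInstance

/-- The identity map from the synonym back to `ℝ`. -/
def GaussR.R (x : GaussR) : ℝ := x

lemma pdf_mul_exp (t x : ℝ) :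
    gaussianPDFReal 0 1 x * Real.exp (t * x ^ 2)
      = (Real.sqrt (2 * π))⁻¹ * Real.exp (-(1 / 2 - t) * x ^ 2) := by
  simp only [gaussianPDFReal, NNReal.coe_one, mul_one, sub_zero]
  rw [mul_assoc, ← Real.exp_add]
  congr 2
  ring

lemma gaussianPDF_eq : gaussianPDF 0 1
    = fun x => ((Real.toNNReal (gaussianPDFReal 0 1 x) : ℝ≥0) : ℝ≥0∞) := rfl

lemma integral_gaussianReal_eq (g : ℝ → ℝ) :
    ∫ x, g x ∂(gaussianReal 0 1) = ∫ x, gaussianPDFReal 0 1 x * g x := by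
  rw [gaussianReal_of_var_ne_zero 0 one_ne_zero, gaussianPDF_eq,
    integral_withDensity_eq_integral_smul (measurable_gaussianPDFReal 0 1).real_toNNReal g]
  congr 1
  funext x
  rw [NNReal.smul_def, smul_eq_mul, Real.coe_toNNReal _ (gaussianPDFReal_nonneg 0 1 x)]

lemma integrable_exp_sq_gaussian {t : ℝ} (ht : t < 1 / 2) :
    Integrable (fun x => Real.exp (t * x ^ 2)) (gaussianReal 0 1) := by
  rw [gaussianReal_of_var_ne_zero 0 one_ne_zero, gaussianPDF_eq,
    integrable_withDensity_iff_integrable_smul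
      (measurable_gaussianPDFReal 0 1).real_toNNReal]
  have h : (fun x => Real.toNNReal (gaussianPDFReal 0 1 x) • Real.exp (t * x ^ 2))
      = fun x => (Real.sqrt (2 * π))⁻¹ * Real.exp (-(1 / 2 - t) * x ^ 2) := by
    funext x
    rw [NNReal.smul_def, smul_eq_mul, Real.coe_toNNReal _ (gaussianPDFReal_nonneg 0 1 x),
      pdf_mul_exp]
  rw [h]
  exact (integrable_exp_neg_mul_sq (by linarith)).const_mul _

lemma integral_exp_sq_gaussian_le {t : ℝ} (ht0 : 0 ≤ t) (ht : t ≤ 1 / 4) :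
    ∫ x, Real.exp (t * x ^ 2) ∂(gaussianReal 0 1) ≤ Real.exp (2 * t) := by
  have hb : (0 : ℝ) < 1 / 2 - t := by linarith
  have hb' : (0 : ℝ) < 1 - 2 * t := by linarith
  rw [integral_gaussianReal_eq]
  simp_rw [pdf_mul_exp]
  rw [MeasureTheory.integral_const_mul, integral_gaussian]
  set A : ℝ := (Real.sqrt (2 * π))⁻¹ * Real.sqrt (π / (1 / 2 - t)) with hA_def
  have hA : 0 ≤ A := by positivity
  have hsq : A ^ 2 = 1 / (1 - 2 * t) := by
    have h2π : (2 * π) ≠ 0 := by positivity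
    have h12 : (1 / 2 - t) ≠ 0 := ne_of_gt hb
    have h12' : (1 - 2 * t) ≠ 0 := ne_of_gt hb'
    rw [hA_def, mul_pow, inv_pow, Real.sq_sqrt (by positivity),
      Real.sq_sqrt (div_nonneg pi_pos.le hb.le)]
    field_simp
  have hexp : Real.exp (2 * t) ^ 2 = Real.exp (4 * t) := by
    rw [sq, ← Real.exp_add]
    ring_nf
  have he : 1 + 4 * t ≤ Real.exp (4 * t) := by
    have := Real.add_one_le_exp (4 * t); linarith
  have h1 : 1 / (1 - 2 * t) ≤ Real.exp (4 * t) := by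
    rw [div_le_iff₀ hb']
    nlinarith
  calc A = Real.sqrt (A ^ 2) := (Real.sqrt_sq hA).symm
    _ = Real.sqrt (1 / (1 - 2 * t)) := by rw [hsq]
    _ ≤ Real.sqrt (Real.exp (2 * t) ^ 2) := by
        apply Real.sqrt_le_sqrt; rw [hexp]; exact h1
    _ = Real.exp (2 * t) := Real.sqrt_sq (Real.exp_pos _).le

end GaussianTensorAux

end

open GaussianTensorAux

/-- sub-Weibull bound for entries of Gaussian tensor powers, Lemma G.10:
for `z ~ N(0, I_d)`, `α ∈ {1,…,d}^ℓ`, `X = ∏_j z_{α(j)}`, and `γ > 1/2`,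
`E[exp(|X|^{2/ℓ}/(8γ))] ≤ e^{1/(2γ)}`. -/
theorem gaussian_tensor_entry_subweibull
    (d ℓ : ℕ) (hd : 1 ≤ d) (hℓ : 1 ≤ ℓ) (γ : ℝ) (hγ : 1 / 2 < γ) (α : Fin ℓ → Fin d) :
    ∫ z, Real.exp (|∏ j, z (α j)| ^ ((2 : ℝ) / (ℓ : ℝ)) / (8 * γ))
        ∂(Measure.pi fun _ : Fin d => gaussianReal 0 1) ≤
      Real.exp (1 / (2 * γ)) := by
  classical
  have hγ0 : (0 : ℝ) < γ := by linarith
  have hℓ0 : (0 : ℝ) < (ℓ : ℝ) := by exact_mod_cast hℓ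
  -- fiber counts
  set c : Fin d → ℕ := fun i => (Finset.univ.filter fun j => α j = i).card with hc_def
  set t : Fin d → ℝ := fun i => (c i : ℝ) / (8 * γ * ℓ) with ht_def
  have hsum_c : ∑ i, c i = ℓ := by
    have := Finset.card_eq_sum_card_fiberwise
      (f := α) (s := Finset.univ) (t := Finset.univ) (fun j _ => Finset.mem_univ (α j))
    simpa [hc_def] using this.symm
  have hc_le : ∀ i, c i ≤ ℓ := by
    intro i
    calc c i ≤ ∑ i', c i' := Finset.single_le_sum (fun _ _ => Nat.zero_le _) (Finset.mem_univ i)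
      _ = ℓ := hsum_c
  have ht_nonneg : ∀ i, 0 ≤ t i := fun i => by
    apply div_nonneg (Nat.cast_nonneg _); positivity
  have ht_le : ∀ i, t i ≤ 1 / 4 := by
    intro i
    rw [ht_def, div_le_div_iff₀ (by positivity) (by norm_num)]
    have h1 : (c i : ℝ) ≤ (ℓ : ℝ) := by exact_mod_cast hc_le i
    nlinarith
  -- regrouping sums over the fibers of α
  have hfiber : ∀ g : Fin d → ℝ, ∑ j, g (α j) = ∑ i, (c i : ℝ) * g i := by
    intro g
    rw [← Finset.sum_fiberwise_of_maps_to (g := α) (fun j _ => Finset.mem_univ (α j))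
      (fun j => g (α j))]
    refine Finset.sum_congr rfl fun i _ => ?_
    rw [Finset.sum_congr rfl (fun j hj => by rw [(Finset.mem_filter.mp hj).2]),
      Finset.sum_const, nsmul_eq_mul]
  -- pointwise bound via AM-GM
  have hpt : ∀ z : Fin d → ℝ,
      Real.exp (|∏ j, z (α j)| ^ ((2 : ℝ) / (ℓ : ℝ)) / (8 * γ))
        ≤ ∏ i, Real.exp (t i * (z i) ^ 2) := by
    intro z
    rw [← Real.exp_sum]
    apply Real.exp_le_exp.mpr
    have hAMGM : |∏ j, z (α j)| ^ ((2 : ℝ) / (ℓ : ℝ))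
        ≤ (∑ j, (z (α j)) ^ 2) / ℓ := by
      have h1 : |∏ j, z (α j)| ^ ((2 : ℝ) / (ℓ : ℝ))
          = ∏ j, ((z (α j)) ^ 2 : ℝ) ^ ((ℓ : ℝ)⁻¹) := by
        rw [Finset.abs_prod,
          ← Real.finset_prod_rpow _ _ (fun j _ => abs_nonneg _) _]
        refine Finset.prod_congr rfl fun j _ => ?_
        rw [← sq_abs, ← Real.rpow_natCast |z (α j)| 2,
          ← Real.rpow_mul (abs_nonneg _)]
        congr 1
        all_goals (push_cast; ring)
      have h2 : ∏ j, ((z (α j)) ^ 2 : ℝ) ^ ((ℓ : ℝ)⁻¹)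
          ≤ ∑ j, (ℓ : ℝ)⁻¹ * (z (α j)) ^ 2 := by
        apply Real.geom_mean_le_arith_mean_weighted Finset.univ
          (fun _ => (ℓ : ℝ)⁻¹) (fun j => (z (α j)) ^ 2)
          (fun _ _ => by positivity) ?_ (fun _ _ => sq_nonneg _)
        rw [Finset.sum_const, Finset.card_univ, Fintype.card_fin, nsmul_eq_mul]
        field_simp
      calc |∏ j, z (α j)| ^ ((2 : ℝ) / (ℓ : ℝ))
          = ∏ j, ((z (α j)) ^ 2 : ℝ) ^ ((ℓ : ℝ)⁻¹) := h1
        _ ≤ ∑ j, (ℓ : ℝ)⁻¹ * (z (α j)) ^ 2 := h2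
        _ = (∑ j, (z (α j)) ^ 2) / ℓ := by
            rw [← Finset.mul_sum, inv_mul_eq_div]
    have hsum : ∑ i, t i * (z i) ^ 2 = (∑ j, (z (α j)) ^ 2) / (8 * γ * ℓ) := by
      rw [hfiber (fun i => (z i) ^ 2), Finset.sum_div]
      refine Finset.sum_congr rfl fun i _ => ?_
      rw [ht_def]
      ring
    rw [hsum]
    rw [div_le_div_iff₀ (by positivity) (by positivity)]
    calc |∏ j, z (α j)| ^ ((2 : ℝ) / (ℓ : ℝ)) * (8 * γ * ℓ)
        ≤ ((∑ j, (z (α j)) ^ 2) / ℓ) * (8 * γ * ℓ) := by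
          apply mul_le_mul_of_nonneg_right hAMGM (by positivity)
      _ = (∑ j, (z (α j)) ^ 2) * (8 * γ) := by field_simp
  -- integrability of the dominating product
  have hint : Integrable (fun z : Fin d → ℝ => ∏ i, Real.exp (t i * (z i) ^ 2))
      (Measure.pi fun _ : Fin d => gaussianReal 0 1) := by
    have : ∀ i, Integrable (fun x : GaussR => Real.exp (t i * GaussR.R x ^ 2)) := by
      intro i
      exact integrable_exp_sq_gaussian (lt_of_le_of_lt (ht_le i) (by norm_num))
    exact MeasureTheory.Integrable.fintype_prod (μ := fun _ => (volume : Measure GaussR)) (f := fun i (x : GaussR) =>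
      Real.exp (t i * GaussR.R x ^ 2)) this
  calc ∫ z, Real.exp (|∏ j, z (α j)| ^ ((2 : ℝ) / (ℓ : ℝ)) / (8 * γ))
        ∂(Measure.pi fun _ : Fin d => gaussianReal 0 1)
      ≤ ∫ z, ∏ i, Real.exp (t i * (z i) ^ 2)
          ∂(Measure.pi fun _ : Fin d => gaussianReal 0 1) := by
        exact integral_mono_of_nonneg (ae_of_all _ fun z => (Real.exp_pos _).le)
          hint (ae_of_all _ hpt)
    _ = ∏ i, ∫ x, Real.exp (t i * x ^ 2) ∂(gaussianReal 0 1) := by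
        have h := MeasureTheory.integral_fintype_prod_eq_prod (ι := Fin d) (μ := fun _ => (volume : Measure GaussR))
          (f := fun i (x : GaussR) => Real.exp (t i * GaussR.R x ^ 2)) (mE := fun _ => MeasureSpace.toMeasurableSpace)
        exact h
    _ ≤ ∏ i, Real.exp (2 * t i) := by
        apply Finset.prod_le_prod
        · intro i _
          exact integral_nonneg fun x => (Real.exp_pos _).le
        · intro i _
          exact integral_exp_sq_gaussian_le (ht_nonneg i) (ht_le i)
    _ = Real.exp (∑ i, 2 * t i) := (Real.exp_sum _ _).symm
    _ ≤ Real.exp (1 / (2 * γ)) := by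
        apply Real.exp_le_exp.mpr
        have hsum_t : ∑ i, 2 * t i = 1 / (4 * γ) := by
          simp_rw [ht_def]
          rw [← Finset.mul_sum, ← Finset.sum_div]
          rw [← Nat.cast_sum, hsum_c]
          field_simp
          ring
        rw [hsum_t, div_le_div_iff₀ (by positivity) (by positivity)]
        nlinarith
end

section
/- Let d, ℓ ≥ 1 be integers, fix an index α = (i₁, …, i_ℓ) ∈ {1,…,d}^ℓ, and let z ~ N(0, I_d) be a standard Gaussian vector in ℝ^d. Set X := z_{i₁}·z_{i₂}···z_{i_ℓ}. Then E[ exp( |X − E[X]|^{2/ℓ}/(8ℓ) ) ] ≤ 2. -/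
open MeasureTheory ProbabilityTheory Real
open scoped NNReal ENNReal

noncomputable section

namespace SWAux

lemma integral_gauss (g : ℝ → ℝ) :
    ∫ x, g x ∂(gaussianReal 0 1) = ∫ x, gaussianPDFReal 0 1 x * g x := by
  rw [gaussianReal_of_var_ne_zero 0 one_ne_zero, gaussianPDF_def]
  have h : (fun x => ENNReal.ofReal (gaussianPDFReal 0 1 x))
      = fun x => ((Real.toNNReal (gaussianPDFReal 0 1 x) : ℝ≥0) : ℝ≥0∞) := rfl
  rw [h, integral_withDensity_eq_integral_smul
    ((measurable_gaussianPDFReal 0 1).real_toNNReal)]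
  refine integral_congr_ae (Filter.Eventually.of_forall fun x => ?_)
  simp only [NNReal.smul_def, smul_eq_mul]
  rw [Real.coe_toNNReal _ (gaussianPDFReal_nonneg 0 1 x)]

lemma pdf_mul_exp (c : ℝ) (x : ℝ) :
    gaussianPDFReal 0 1 x * Real.exp (c * x ^ 2)
      = (Real.sqrt (2 * π))⁻¹ * Real.exp (-(1/2 - c) * x ^ 2) := by
  simp only [gaussianPDFReal, NNReal.coe_one, mul_one, sub_zero, mul_assoc, ← Real.exp_add]
  congr 2
  ring

lemma integral_exp_sq {c : ℝ} (hc : c < 1/2) :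
    ∫ x, Real.exp (c * x ^ 2) ∂(gaussianReal 0 1) = Real.sqrt (1 - 2*c)⁻¹ := by
  have hb : 0 < 1/2 - c := by linarith
  rw [integral_gauss]
  simp_rw [pdf_mul_exp c]
  rw [integral_const_mul, integral_gaussian]
  rw [← Real.sqrt_inv, ← Real.sqrt_mul (by positivity)]
  congr 1
  have hπ : π ≠ 0 := Real.pi_ne_zero
  have hne : (1:ℝ)/2 - c ≠ 0 := ne_of_gt hb
  have hne2 : (1:ℝ) - 2*c ≠ 0 := by linarith
  field_simp

lemma integrable_exp_sq {c : ℝ} (hc : c < 1/2) :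
    Integrable (fun x => Real.exp (c * x ^ 2)) (gaussianReal 0 1) := by
  have hb : 0 < 1/2 - c := by linarith
  rw [gaussianReal_of_var_ne_zero 0 one_ne_zero, gaussianPDF_def]
  rw [integrable_withDensity_iff ((measurable_gaussianPDFReal 0 1).ennreal_ofReal)
    (Filter.Eventually.of_forall fun x => ENNReal.ofReal_lt_top)]
  have h : ∀ x : ℝ, Real.exp (c * x ^ 2) * (ENNReal.ofReal (gaussianPDFReal 0 1 x)).toReal
      = (Real.sqrt (2 * π))⁻¹ * Real.exp (-(1/2 - c) * x ^ 2) := by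
    intro x
    rw [ENNReal.toReal_ofReal (gaussianPDFReal_nonneg 0 1 x), mul_comm, pdf_mul_exp]
  simp_rw [h]
  exact (integrable_exp_neg_mul_sq hb).const_mul _

lemma factor_bound {c : ℝ} (h0 : 0 ≤ c) (h4 : c ≤ 1/8) :
    ∫ x, Real.exp (c * x ^ 2) ∂(gaussianReal 0 1) ≤ Real.exp (2*c) := by
  rw [integral_exp_sq (by linarith)]
  have h1 : (0:ℝ) < 1 - 2*c := by linarith
  have h2 : 1 + 4*c ≤ Real.exp (4*c) := by linarith [Real.add_one_le_exp (4*c)]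
  have h3 : (1 - 2*c)⁻¹ ≤ Real.exp (4*c) := by
    rw [inv_eq_one_div, div_le_iff₀ h1]
    nlinarith
  calc Real.sqrt (1 - 2*c)⁻¹ ≤ Real.sqrt (Real.exp (4*c)) := Real.sqrt_le_sqrt h3
    _ = Real.exp (2*c) := by
        rw [show (4:ℝ)*c = 2*c + 2*c by ring, Real.exp_add,
          Real.sqrt_mul_self (Real.exp_nonneg _)]

lemma gauss_mean : ∫ x, x ∂(gaussianReal 0 1) = 0 := by
  rw [integral_gauss]
  have hodd : ∀ x : ℝ, gaussianPDFReal 0 1 (-x) * (-x) = -(gaussianPDFReal 0 1 x * x) := by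
    intro x
    have : gaussianPDFReal 0 1 (-x) = gaussianPDFReal 0 1 x := by
      simp [gaussianPDFReal, neg_sq]
    rw [this]; ring
  have h := integral_neg_eq_self (fun x => gaussianPDFReal 0 1 x * x) (volume : Measure ℝ)
  simp_rw [hodd] at h
  rw [integral_neg] at h
  linarith
lemma abs_pow_le (k : ℕ) (hk : 1 ≤ k) (x : ℝ) :
    |x| ^ k ≤ Real.sqrt ((2*k/Real.exp 1)^k) * Real.exp (x^2/4) := by
  have e1 : (0:ℝ) < Real.exp 1 := Real.exp_pos 1
  have hk0 : (0:ℝ) < k := by exact_mod_cast hk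
  have h2k : (0:ℝ) < 2*k/Real.exp 1 := by positivity
  have key : (x^2)^k ≤ (2*k/Real.exp 1)^k * Real.exp (x^2/2) := by
    set u : ℝ := x^2 / (2*k) with hu
    have hu0 : 0 ≤ u := by positivity
    have hue : u ≤ Real.exp (u - 1) := by linarith [Real.add_one_le_exp (u-1)]
    have h1 : u * Real.exp 1 ≤ Real.exp u := by
      calc u * Real.exp 1 ≤ Real.exp (u-1) * Real.exp 1 :=
            mul_le_mul_of_nonneg_right hue e1.le
        _ = Real.exp u := by rw [← Real.exp_add]; ring_nf
    have h2 : (u * Real.exp 1)^k ≤ (Real.exp u)^k :=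
      pow_le_pow_left₀ (by positivity) h1 k
    have hx2 : x^2 = 2*k*u := by rw [hu]; field_simp
    calc (x^2)^k = (2*k/Real.exp 1)^k * (u * Real.exp 1)^k := by
          rw [← mul_pow]; congr 1; rw [hx2]; field_simp
      _ ≤ (2*k/Real.exp 1)^k * (Real.exp u)^k :=
          mul_le_mul_of_nonneg_left h2 (pow_nonneg h2k.le k)
      _ = (2*k/Real.exp 1)^k * Real.exp (x^2/2) := by
          congr 1
          rw [← Real.exp_nat_mul]
          congr 1
          rw [hx2]; field_simp
  have habs : |x| ^ k = Real.sqrt ((x^2)^k) := by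
    rw [← Real.sqrt_sq (pow_nonneg (abs_nonneg x) k), ← pow_mul]
    congr 1
    rw [mul_comm k 2, pow_mul, sq_abs]
  rw [habs]
  calc Real.sqrt ((x^2)^k) ≤ Real.sqrt ((2*k/Real.exp 1)^k * Real.exp (x^2/2)) :=
        Real.sqrt_le_sqrt key
    _ = Real.sqrt ((2*k/Real.exp 1)^k) * Real.exp (x^2/4) := by
        rw [Real.sqrt_mul (by positivity)]
        congr 1
        rw [show x^2/2 = x^2/4 + x^2/4 by ring, Real.exp_add,
          Real.sqrt_mul_self (Real.exp_nonneg _)]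

lemma pi_integral_prod {d : ℕ} (f : Fin d → ℝ → ℝ) :
    ∫ z : Fin d → ℝ, ∏ i, f i (z i) ∂(Measure.pi fun _ : Fin d => gaussianReal 0 1)
      = ∏ i, ∫ x, f i x ∂(gaussianReal 0 1) :=
  MeasureTheory.integral_fintype_prod_eq_prod (E := fun _ => ℝ) f
    (μ := fun _ => gaussianReal 0 1)

lemma pi_integrable_prod {d : ℕ} (f : Fin d → ℝ → ℝ)
    (hf : ∀ i, Integrable (f i) (gaussianReal 0 1)) :
    Integrable (fun z : Fin d → ℝ => ∏ i, f i (z i))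
      (Measure.pi fun _ : Fin d => gaussianReal 0 1) :=
  Integrable.fintype_prod (f := f) (μ := fun _ => gaussianReal 0 1) hf

lemma rpow_sub_add {x y p : ℝ} (hp0 : 0 ≤ p) (hp1 : p ≤ 1) :
    |x - y| ^ p ≤ |x| ^ p + |y| ^ p := by
  have h1 : |x - y| ≤ |x| + |y| := abs_sub x y
  have h2 : |x - y| ^ p ≤ (|x| + |y|) ^ p :=
    Real.rpow_le_rpow (abs_nonneg _) h1 hp0
  refine h2.trans ?_
  have hx := abs_nonneg x
  have hy := abs_nonneg y
  have key := NNReal.rpow_add_le_add_rpow (Real.toNNReal |x|) (Real.toNNReal |y|) hp0 hp1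
  have h4 := (NNReal.coe_le_coe).mpr key
  push_cast [NNReal.coe_rpow, Real.coe_toNNReal _ hx, Real.coe_toNNReal _ hy] at h4
  exact h4

lemma moment_bound {l : ℕ} (hl : 1 ≤ l) {k : ℕ} (hk : k ≤ l) :
    |∫ x, x ^ k ∂(gaussianReal 0 1)| ≤ Real.sqrt (2*l) ^ k := by
  have hl0 : (0:ℝ) < l := by exact_mod_cast hl
  rcases Nat.eq_zero_or_pos k with rfl | hk1
  · simp
  have e1 : (0:ℝ) < Real.exp 1 := Real.exp_pos 1
  have hk0 : (0:ℝ) < k := by exact_mod_cast hk1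
  have step1 : |∫ x, x ^ k ∂(gaussianReal 0 1)| ≤ ∫ x, |x| ^ k ∂(gaussianReal 0 1) := by
    have := norm_integral_le_integral_norm (μ := gaussianReal 0 1) (fun x : ℝ => x ^ k)
    simpa [Real.norm_eq_abs, abs_pow] using this
  have step2 : ∫ x, |x| ^ k ∂(gaussianReal 0 1)
      ≤ Real.sqrt ((2*k/Real.exp 1)^k) * Real.sqrt 2 := by
    have hint : Integrable
        (fun x : ℝ => Real.sqrt ((2*(k:ℝ)/Real.exp 1)^k) * Real.exp ((1/4) * x^2))
        (gaussianReal 0 1) := (integrable_exp_sq (by norm_num)).const_mul _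
    calc ∫ x, |x| ^ k ∂(gaussianReal 0 1)
        ≤ ∫ x, Real.sqrt ((2*(k:ℝ)/Real.exp 1)^k) * Real.exp ((1/4) * x^2)
            ∂(gaussianReal 0 1) := by
          refine integral_mono_of_nonneg (Filter.Eventually.of_forall fun x => by positivity)
            hint (Filter.Eventually.of_forall fun x => ?_)
          simpa [show (4:ℝ)⁻¹*x^2 = x^2/4 by ring] using abs_pow_le k hk1 x
      _ = Real.sqrt ((2*(k:ℝ)/Real.exp 1)^k) * ∫ x, Real.exp ((1/4)*x^2) ∂(gaussianReal 0 1) :=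
          integral_const_mul _ _
      _ = Real.sqrt ((2*k/Real.exp 1)^k) * Real.sqrt 2 := by
          rw [integral_exp_sq (by norm_num)]
          norm_num
  have step3 : Real.sqrt ((2*k/Real.exp 1)^k) * Real.sqrt 2 ≤ Real.sqrt (2*l) ^ k := by
    rw [← Real.sqrt_mul (by positivity)]
    have hpow : Real.sqrt (2*(l:ℝ)) ^ k = Real.sqrt ((2*(l:ℝ))^k) := by
      rw [Real.sqrt_eq_rpow, Real.sqrt_eq_rpow, ← Real.rpow_natCast ((2*(l:ℝ))^((1:ℝ)/2)) k,
        ← Real.rpow_mul (by positivity), ← Real.rpow_natCast (2*(l:ℝ)) k,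
        ← Real.rpow_mul (by positivity)]
      ring_nf
    rw [hpow]
    apply Real.sqrt_le_sqrt
    have h2e : (2:ℝ) ≤ Real.exp 1 := by linarith [Real.add_one_le_exp 1]
    have hek : Real.exp 1 ≤ Real.exp 1 ^ k := le_self_pow₀ (by linarith) (Nat.pos_iff_ne_zero.mp hk1)
    calc (2*(k:ℝ)/Real.exp 1)^k * 2 ≤ (2*(k:ℝ)/Real.exp 1)^k * Real.exp 1 ^ k := by
          exact mul_le_mul_of_nonneg_left (h2e.trans hek) (by positivity)
      _ = (2*(k:ℝ))^k := by rw [← mul_pow]; congr 1; field_simp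
      _ ≤ (2*(l:ℝ))^k := by
          refine pow_le_pow_left₀ (by positivity) ?_ k
          have : (k:ℝ) ≤ l := by exact_mod_cast hk
          linarith
  exact step1.trans (step2.trans step3)

end SWAux


open SWAux

/-- sub-Weibull bound for centered entries of Gaussian tensor powers,
Lemma G.11: for `z ~ N(0, I_d)`, `α ∈ {1,…,d}^ℓ`, and `X = ∏_j z_{α(j)}`,
`E[exp(|X − E[X]|^{2/ℓ}/(8ℓ))] ≤ 2`. -/
theorem gaussian_tensor_entry_centered_subweibull
    (d ℓ : ℕ) (hd : 1 ≤ d) (hℓ : 1 ≤ ℓ) (α : Fin ℓ → Fin d) :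
    ∫ z, Real.exp (|(∏ j, z (α j)) -
          (∫ w, ∏ j, w (α j) ∂(Measure.pi fun _ : Fin d => gaussianReal 0 1))| ^
            ((2 : ℝ) / (ℓ : ℝ)) / (8 * (ℓ : ℝ)))
        ∂(Measure.pi fun _ : Fin d => gaussianReal 0 1) ≤ 2 := by
  classical
  have hℓ0 : (0:ℝ) < ℓ := by exact_mod_cast hℓ
  have hℓR : (1:ℝ) ≤ ℓ := by exact_mod_cast hℓ
  set μ := Measure.pi fun _ : Fin d => gaussianReal 0 1 with hμ
  set m : Fin d → ℕ := fun i => (Finset.univ.filter fun j => α j = i).card with hm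
  have hsum : ∑ i, m i = ℓ := by
    have h := Finset.card_eq_sum_card_fiberwise
      (f := α) (s := Finset.univ) (t := Finset.univ) (fun x _ => Finset.mem_univ _)
    simpa [hm] using h.symm
  have hmle : ∀ i, m i ≤ ℓ := by
    intro i
    have := Finset.card_filter_le (Finset.univ : Finset (Fin ℓ)) (fun j => α j = i)
    simpa [hm] using this
  have hprod : ∀ z : Fin d → ℝ, ∏ j, z (α j) = ∏ i, z i ^ m i := by
    intro z
    rw [← Finset.prod_fiberwise_of_maps_to
      (fun j (_ : j ∈ Finset.univ) => Finset.mem_univ (α j)) (fun j => z (α j))]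
    refine Finset.prod_congr rfl fun i _ => ?_
    calc ∏ j ∈ Finset.univ.filter (fun j => α j = i), z (α j)
        = ∏ j ∈ Finset.univ.filter (fun j => α j = i), z i :=
          Finset.prod_congr rfl (fun j hj => by rw [(Finset.mem_filter.1 hj).2])
      _ = z i ^ m i := by rw [Finset.prod_const, hm]
  set E := ∫ w, ∏ j, w (α j) ∂μ with hE
  have hEfact : E = ∏ i, ∫ x, x ^ m i ∂(gaussianReal 0 1) := by
    rw [hE, hμ]
    simp_rw [hprod]
    exact pi_integral_prod (fun i x => x ^ m i)
  have hEb : |E| ≤ Real.sqrt (2*(ℓ:ℝ)) ^ ℓ := by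
    rw [hEfact, Finset.abs_prod]
    calc ∏ i, |∫ x, x ^ m i ∂(gaussianReal 0 1)|
        ≤ ∏ i, Real.sqrt (2*(ℓ:ℝ)) ^ (m i) :=
          Finset.prod_le_prod (fun i _ => abs_nonneg _)
            (fun i _ => moment_bound hℓ (hmle i))
      _ = Real.sqrt (2*(ℓ:ℝ)) ^ (∑ i, m i) := by rw [Finset.prod_pow_eq_pow_sum]
      _ = _ := by rw [hsum]
  have hE2 : |E| ^ ((2:ℝ)/ℓ) ≤ 2*(ℓ:ℝ) := by
    have h1 : |E| ^ ((2:ℝ)/ℓ) ≤ (Real.sqrt (2*(ℓ:ℝ)) ^ ℓ) ^ ((2:ℝ)/ℓ) :=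
      Real.rpow_le_rpow (abs_nonneg E) hEb (by positivity)
    refine h1.trans (le_of_eq ?_)
    rw [← Real.rpow_natCast (Real.sqrt (2*(ℓ:ℝ))) ℓ, ← Real.rpow_mul (Real.sqrt_nonneg _)]
    rw [show (ℓ:ℝ) * ((2:ℝ)/ℓ) = 2 by field_simp]
    rw [show ((2:ℝ) : ℝ) = ((2:ℕ):ℝ) by norm_num, Real.rpow_natCast,
      Real.sq_sqrt (by positivity)]
  set c : Fin d → ℝ := fun i => (m i : ℝ) / (8*(ℓ:ℝ)^2) with hc
  have hc0 : ∀ i, 0 ≤ c i := fun i => by positivity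
  have hc8 : ∀ i, c i ≤ 1/8 := by
    intro i
    rw [hc]
    dsimp only
    rw [div_le_iff₀ (by positivity)]
    have : (m i : ℝ) ≤ ℓ := by exact_mod_cast hmle i
    nlinarith [hℓR]
  have hpt : ∀ z : Fin d → ℝ,
      Real.exp (|(∏ j, z (α j)) - E| ^ ((2:ℝ)/(ℓ:ℝ)) / (8*(ℓ:ℝ)))
        ≤ Real.exp (1/4) * ∏ i, Real.exp (c i * (z i)^2) := by
    intro z
    rw [← Real.exp_sum, ← Real.exp_add, Real.exp_le_exp,
      div_le_iff₀ (by positivity : (0:ℝ) < 8*(ℓ:ℝ))]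
    have hAM : |∏ j, z (α j)| ^ ((2:ℝ)/ℓ) ≤ (∑ i, (m i:ℝ) * (z i)^2)/ℓ := by
      rw [hprod z]
      have hGM := Real.geom_mean_le_arith_mean_weighted Finset.univ
        (fun i => (m i : ℝ)/ℓ) (fun i => (z i)^2)
        (fun i _ => by positivity)
        (by rw [← Finset.sum_div, ← Nat.cast_sum, hsum]; field_simp)
        (fun i _ => sq_nonneg _)
      have heq : |∏ i, z i ^ m i| ^ ((2:ℝ)/ℓ) = ∏ i, ((z i)^2) ^ ((m i:ℝ)/ℓ) := by
        rw [Finset.abs_prod, ← Real.finset_prod_rpow _ _ (fun i _ => abs_nonneg _) _]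
        refine Finset.prod_congr rfl fun i _ => ?_
        rw [abs_pow, ← Real.rpow_natCast |z i| (m i), ← Real.rpow_mul (abs_nonneg _),
          ← sq_abs (z i), ← Real.rpow_natCast |z i| 2, ← Real.rpow_mul (abs_nonneg _)]
        congr 1
        push_cast
        ring
      rw [heq]
      refine hGM.trans (le_of_eq ?_)
      rw [Finset.sum_div]
      exact Finset.sum_congr rfl fun i _ => by ring
    have habs : |(∏ j, z (α j)) - E| ^ ((2:ℝ)/(ℓ:ℝ))
        ≤ |∏ j, z (α j)| ^ ((2:ℝ)/(ℓ:ℝ)) + 2*(ℓ:ℝ) := by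
      rcases eq_or_lt_of_le hℓ with h1 | h2
      · have hE0 : E = 0 := by
          obtain ⟨i0, hi0⟩ : ∃ i, m i ≠ 0 := by
            by_contra hcon
            push_neg at hcon
            have : ∑ i, m i = 0 := Finset.sum_eq_zero fun i _ => hcon i
            omega
          have hmi0 : m i0 = 1 := by
            have h1' := Finset.single_le_sum (f := m)
              (fun i _ => Nat.zero_le _) (Finset.mem_univ i0)
            omega
          rw [hEfact]
          refine Finset.prod_eq_zero (Finset.mem_univ i0) ?_
          rw [hmi0]
          simpa using gauss_mean
        rw [hE0, sub_zero]
        have : (0:ℝ) ≤ 2*(ℓ:ℝ) := by positivity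
        linarith
      · have hp1 : (2:ℝ)/(ℓ:ℝ) ≤ 1 := by
          rw [div_le_one hℓ0]
          exact_mod_cast (by omega : 2 ≤ ℓ)
        calc |(∏ j, z (α j)) - E| ^ ((2:ℝ)/(ℓ:ℝ))
            ≤ |∏ j, z (α j)| ^ ((2:ℝ)/(ℓ:ℝ)) + |E| ^ ((2:ℝ)/(ℓ:ℝ)) :=
              rpow_sub_add (by positivity) hp1
          _ ≤ |∏ j, z (α j)| ^ ((2:ℝ)/(ℓ:ℝ)) + 2*(ℓ:ℝ) := by linarith [hE2]
    have hsum_eq : (1/4 + ∑ i, c i * (z i)^2) * (8*(ℓ:ℝ))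
        = 2*(ℓ:ℝ) + (∑ i, (m i:ℝ) * (z i)^2)/ℓ := by
      rw [add_mul, Finset.sum_mul, Finset.sum_div]
      congr 1
      · ring
      · refine Finset.sum_congr rfl fun i _ => ?_
        rw [hc]
        dsimp only
        field_simp
    rw [hsum_eq]
    linarith [hAM, habs]
  have hci : ∀ i, Integrable (fun x : ℝ => Real.exp (c i * x ^ 2)) (gaussianReal 0 1) :=
    fun i => integrable_exp_sq (lt_of_le_of_lt (hc8 i) (by norm_num))
  have hint : Integrable
      (fun z : Fin d → ℝ => Real.exp (1/4) * ∏ i, Real.exp (c i * (z i)^2)) μ := by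
    rw [hμ]
    exact (pi_integrable_prod (fun i x => Real.exp (c i * x^2)) hci).const_mul _
  refine le_trans (integral_mono_of_nonneg
    (Filter.Eventually.of_forall fun z => (Real.exp_pos _).le) hint
    (Filter.Eventually.of_forall hpt)) ?_
  rw [integral_const_mul, hμ, pi_integral_prod (fun i x => Real.exp (c i * x^2))]
  calc Real.exp (1/4) * ∏ i, ∫ x, Real.exp (c i * x^2) ∂(gaussianReal 0 1)
      ≤ Real.exp (1/4) * ∏ i, Real.exp (2 * c i) := by
        refine mul_le_mul_of_nonneg_left ?_ (Real.exp_nonneg _)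
        exact Finset.prod_le_prod
          (fun i _ => integral_nonneg fun x => (Real.exp_pos _).le)
          (fun i _ => factor_bound (hc0 i) (hc8 i))
    _ = Real.exp (1/4) * Real.exp (∑ i, 2 * c i) := by rw [Real.exp_sum]
    _ ≤ 2 := by
        rw [← Real.exp_add]
        have hcs : ∑ i, 2 * c i = 1/(4*(ℓ:ℝ)) := by
          rw [hc]
          dsimp only
          rw [← Finset.mul_sum, ← Finset.sum_div, ← Nat.cast_sum, hsum]
          field_simp
          ring
        rw [hcs]
        have h14 : (1:ℝ)/(4*ℓ) ≤ 1/4 :=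
          one_div_le_one_div_of_le (by norm_num) (by linarith [hℓR])
        have hexp : Real.exp (1/4 + 1/(4*(ℓ:ℝ))) ≤ Real.exp (1/2) :=
          Real.exp_le_exp.mpr (by linarith)
        refine hexp.trans ?_
        have he : Real.exp 1 < 2.7182818286 := Real.exp_one_lt_d9
        have h2 : Real.exp (1/2) ^ 2 = Real.exp 1 := by
          rw [sq, ← Real.exp_add]
          norm_num
        nlinarith [Real.exp_pos (1/2)]
end
end

section
/- Let σ be a finite type, t ∈ ℕ, and let Ẽ be a degree-t pseudoexpectation on multivariate real polynomials in variables σ. Let x be a polynomial with total degree at most k, and let r, r' be even natural numbers with 2 ≤ r ≤ r' and k·r' ≤ t. Then Ẽ(x^r) ≥ 0 and Ẽ(x^{r'}) ≥ ( Ẽ(x^r) )^{r'/r}, where the right-hand side is the real power with exponent r'/r. -/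
private lemma pe_cauchy_schwarz {σ : Type*} {t : ℕ}
    (E : MvPolynomial σ ℝ →ₗ[ℝ] ℝ)
    (hE2 : ∀ p : MvPolynomial σ ℝ, 2 * p.totalDegree ≤ t → 0 ≤ E (p ^ 2))
    (p q : MvPolynomial σ ℝ) (hp : 2 * p.totalDegree ≤ t) (hq : 2 * q.totalDegree ≤ t) :
    (E (p * q)) ^ 2 ≤ E (p ^ 2) * E (q ^ 2) := by
  have key : ∀ lam : ℝ, 0 ≤ E (p^2) * (lam*lam) + (2 * E (p*q)) * lam + E (q^2) := by
    intro lam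
    have hdeg : 2 * (lam • p + q).totalDegree ≤ t := by
      have h1 : (lam • p + q).totalDegree ≤ max (lam • p).totalDegree q.totalDegree :=
        MvPolynomial.totalDegree_add _ _
      have h2 : (lam • p).totalDegree ≤ p.totalDegree := MvPolynomial.totalDegree_smul_le _ _
      have h3 : (lam • p + q).totalDegree ≤ max p.totalDegree q.totalDegree :=
        le_trans h1 (max_le_max h2 le_rfl)
      rcases max_cases p.totalDegree q.totalDegree with ⟨he, _⟩ | ⟨he, _⟩ <;>
        rw [he] at h3 <;> omega
    have hexp : (lam • p + q)^2 = (lam^2) • p^2 + (2*lam) • (p*q) + q^2 := by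
      simp only [MvPolynomial.smul_eq_C_mul, map_mul, map_pow, map_ofNat]
      ring
    have := hE2 _ hdeg
    rw [hexp] at this
    simp only [map_add, map_smul, smul_eq_mul] at this
    nlinarith [this]
  have hd := discrim_le_zero key
  rw [discrim] at hd
  nlinarith [hd]


private lemma seq_step {a : ℕ → ℝ} {N : ℕ} (h0 : a 0 = 1)
    (hnn : ∀ j, j ≤ N → 0 ≤ a j)
    (hlc : ∀ j, 1 ≤ j → j + 1 ≤ N → (a j) ^ 2 ≤ a (j - 1) * a (j + 1)) :
    ∀ j, 1 ≤ j → j + 1 ≤ N → (a j) ^ (j + 1) ≤ (a (j + 1)) ^ j := by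
  intro j
  induction j with
  | zero => intro h; omega
  | succ i ih =>
    intro _ hjN
    rcases Nat.eq_zero_or_pos i with hi | hi
    · subst hi
      have h1 := hlc 1 le_rfl (by omega)
      simpa [h0] using h1
    · have ih' := ih hi (by omega)
      have hcs := hlc (i + 1) (by omega) (by omega)
      simp only [Nat.add_sub_cancel] at hcs
      by_cases hz : a (i + 1) = 0
      · rw [hz, zero_pow (by omega)]
        exact pow_nonneg (hnn (i + 2) (by omega)) _
      · have hpos : 0 < a (i + 1) := lt_of_le_of_ne (hnn _ (by omega)) (Ne.symm hz)
        have h1 : (a (i + 1)) ^ (2 * (i + 1)) ≤ (a i) ^ (i + 1) * (a (i + 2)) ^ (i + 1) := by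
          calc (a (i + 1)) ^ (2 * (i + 1)) = ((a (i + 1)) ^ 2) ^ (i + 1) := by rw [pow_mul]
          _ ≤ (a i * a (i + 2)) ^ (i + 1) := pow_le_pow_left₀ (sq_nonneg _) hcs _
          _ = _ := mul_pow _ _ _
        have h2 : (a i) ^ (i + 1) * (a (i + 2)) ^ (i + 1)
            ≤ (a (i + 1)) ^ i * (a (i + 2)) ^ (i + 1) :=
          mul_le_mul_of_nonneg_right ih' (pow_nonneg (hnn _ (by omega)) _)
        have h3 : (a (i + 1)) ^ i * (a (i + 1)) ^ (i + 2)
            ≤ (a (i + 1)) ^ i * (a (i + 2)) ^ (i + 1) := by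
          rw [← pow_add]
          have : i + (i + 2) = 2 * (i + 1) := by omega
          rw [this]
          exact le_trans h1 h2
        exact le_of_mul_le_mul_left h3 (pow_pos hpos i)

private lemma seq_main {a : ℕ → ℝ} {N : ℕ} (h0 : a 0 = 1)
    (hnn : ∀ j, j ≤ N → 0 ≤ a j)
    (hlc : ∀ j, 1 ≤ j → j + 1 ≤ N → (a j) ^ 2 ≤ a (j - 1) * a (j + 1))
    (n : ℕ) (hn1 : 1 ≤ n) :
    ∀ m, n ≤ m → m ≤ N → (a n) ^ m ≤ (a m) ^ n := by
  intro m hnm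
  induction m, hnm using Nat.le_induction with
  | base => intro _; exact le_refl _
  | succ j hj ih =>
    intro hN
    have ihj := ih (by omega)
    have hstep := seq_step h0 hnn hlc j (by omega) hN
    by_cases hz : a j = 0
    · have hz2 : a n ^ j = 0 := by
        have h1 : a n ^ j ≤ 0 := by simpa [hz, zero_pow (by omega : n ≠ 0)] using ihj
        exact le_antisymm h1 (pow_nonneg (hnn n (by omega)) _)
      have : a n = 0 := pow_eq_zero_iff (by omega : j ≠ 0) |>.mp hz2
      rw [this, zero_pow (by omega : j + 1 ≠ 0)]
      exact pow_nonneg (hnn (j + 1) hN) _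
    · have hc : (a n ^ (j + 1)) ^ j ≤ (a (j + 1) ^ n) ^ j := by
        calc (a n ^ (j + 1)) ^ j = (a n ^ j) ^ (j + 1) := by
              rw [← pow_mul, ← pow_mul]; ring_nf
        _ ≤ (a j ^ n) ^ (j + 1) :=
              pow_le_pow_left₀ (pow_nonneg (hnn n (by omega)) _) ihj _
        _ = (a j ^ (j + 1)) ^ n := by rw [← pow_mul, ← pow_mul]; ring_nf
        _ ≤ (a (j + 1) ^ j) ^ n :=
              pow_le_pow_left₀ (pow_nonneg (hnn j (by omega)) _) hstep _
        _ = (a (j + 1) ^ n) ^ j := by rw [← pow_mul, ← pow_mul]; ring_nf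
      exact le_of_pow_le_pow_left₀ (by omega) (pow_nonneg (hnn (j + 1) hN) _) hc



/-- Hölder's inequality for pseudoexpectations, Corollary G.17:
if `Ẽ` is a degree-`t` pseudoexpectation, `x` has total degree at most `k`, `r ≤ r'` are
even with `2 ≤ r` and `k·r' ≤ t`, then `Ẽ(x^r) ≥ 0` and `Ẽ(x^{r'}) ≥ (Ẽ(x^r))^{r'/r}`. -/
theorem pseudoexpectation_holder
    (σ : Type*) [Fintype σ] (t : ℕ)
    (E : MvPolynomial σ ℝ →ₗ[ℝ] ℝ)
    (hE1 : E 1 = 1)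
    (hE2 : ∀ p : MvPolynomial σ ℝ, 2 * p.totalDegree ≤ t → 0 ≤ E (p ^ 2))
    (x : MvPolynomial σ ℝ) (k : ℕ) (hx : x.totalDegree ≤ k)
    (r r' : ℕ) (hr : Even r) (hr' : Even r') (h2 : 2 ≤ r) (hrr : r ≤ r')
    (ht : k * r' ≤ t) :
    0 ≤ E (x ^ r) ∧ (E (x ^ r)) ^ ((r' : ℝ) / (r : ℝ)) ≤ E (x ^ r') := by
  obtain ⟨n, hn⟩ := hr
  obtain ⟨n', hn'⟩ := hr'
  set a : ℕ → ℝ := fun j => E (x ^ (j * 2)) with ha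
  have hdeg : ∀ j : ℕ, j ≤ n' → 2 * (x ^ j).totalDegree ≤ t := by
    intro j hj
    have h1 : (x ^ j).totalDegree ≤ j * x.totalDegree := MvPolynomial.totalDegree_pow _ _
    have h2 : j * x.totalDegree ≤ j * k := Nat.mul_le_mul_left _ hx
    have : 2 * (j * k) ≤ k * r' := by rw [hn']; ring_nf; nlinarith [hj]
    omega
  have hsq : ∀ j : ℕ, a j = E ((x ^ j) ^ 2) := by
    intro j; simp only [ha, ← pow_mul]
  have h0 : a 0 = 1 := by rw [ha]; simpa using hE1
  have hnn : ∀ j, j ≤ n' → 0 ≤ a j := by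
    intro j hj; rw [hsq]; exact hE2 _ (hdeg j hj)
  have hlc : ∀ j, 1 ≤ j → j + 1 ≤ n' → (a j) ^ 2 ≤ a (j - 1) * a (j + 1) := by
    intro j hj1 hjn
    have hmul : x ^ (j * 2) = x ^ (j - 1) * x ^ (j + 1) := by
      rw [← pow_add]; congr 1; omega
    have hcs := pe_cauchy_schwarz E hE2 (x ^ (j - 1)) (x ^ (j + 1))
      (hdeg (j - 1) (by omega)) (hdeg (j + 1) hjn)
    rw [hsq (j - 1), hsq (j + 1)]
    calc (a j) ^ 2 = (E (x ^ (j - 1) * x ^ (j + 1))) ^ 2 := by rw [ha]; simp only [← hmul]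
    _ ≤ _ := hcs
  have hn1 : 1 ≤ n := by omega
  have hnle : n ≤ n' := by omega
  have han : a n = E (x ^ r) := by show E (x ^ (n * 2)) = E (x ^ r); rw [show n * 2 = r by omega]
  have han' : a n' = E (x ^ r') := by show E (x ^ (n' * 2)) = E (x ^ r'); rw [show n' * 2 = r' by omega]
  have h0n : 0 ≤ a n := hnn n hnle
  have h0n' : 0 ≤ a n' := hnn n' le_rfl
  have key : (a n) ^ n' ≤ (a n') ^ n := seq_main h0 hnn hlc n hn1 n' hnle le_rfl
  constructor
  · rw [← han]; exact h0n
  · rw [← han, ← han']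
    have hrat : (r' : ℝ) / (r : ℝ) = (n' : ℝ) / (n : ℝ) := by
      rw [hn, hn']; push_cast; rw [div_eq_div_iff] <;> [ring; positivity; positivity]
    rw [hrat]
    have hne : (n : ℝ) ≠ 0 := by positivity
    calc (a n) ^ ((n' : ℝ) / (n : ℝ)) = ((a n) ^ (n' : ℕ)) ^ ((1 : ℝ) / (n : ℝ)) := by
          rw [← Real.rpow_natCast (a n) n', ← Real.rpow_mul h0n, mul_one_div]
    _ ≤ ((a n') ^ (n : ℕ)) ^ ((1 : ℝ) / (n : ℝ)) :=
          Real.rpow_le_rpow (pow_nonneg h0n _) key (by positivity)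
    _ = a n' := by
          rw [← Real.rpow_natCast (a n') n, ← Real.rpow_mul h0n', mul_one_div,
            div_self hne, Real.rpow_one]
end
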